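/- For every k ≥ 0 and every a ∈ {1,…,d}, the linear map J_k : F_k → F_{k+1} determined by J_k e_γ = e_{(γ_1,…,γ_k,a)} preserves the Fock form: ⟨J_k x, J_k y⟩_F = ⟨x, y⟩_F for all x, y ∈ F_k. -/

import Mathlib

open scoped BigOperators InnerProductSpace

namespace QCstar

variable {d : ℕ}

/-- `q(j,α)`: product of `q j a` over the prefix of `α` preceding the first
occurrence of `j` (the whole list if `j` does not occur in `α`). -/
def qOne (q : Fin d → Fin d → ℂ) (j : Fin d) (α : List (Fin d)) : ℂ :=
  ((α.takeWhile fun a => a ≠ j).map (q j)).prod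

/-- `q(α,β)` for finite multiindices, defined by recursion on `α`. -/
def qMul (q : Fin d → Fin d → ℂ) : List (Fin d) → List (Fin d) → ℂ
  | [], _ => 1
  | a :: α, β => qOne q a β * qMul q α (β.erase a)

/-- `s_α = s_{α₁} ⋯ s_{α_m}`. -/
def sWord {A : Type*} [Monoid A] (s : Fin d → A) (α : List (Fin d)) : A :=
  (α.map s).prod

/-- The shift on infinite multiindices. -/
def shift (β : ℕ → Fin d) : ℕ → Fin d := fun n => β (n + 1)

/-- The finite multiindex `(β₁,…,β_m)`. -/
def prefixList (β : ℕ → Fin d) (m : ℕ) : List (Fin d) :=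
  List.ofFn fun i : Fin m => β i

/-- `β ∼ α`: the tails agree up to a shift. -/
def equivTail (β α : ℕ → Fin d) : Prop := ∃ m n, shift^[m] β = shift^[n] α

/-- `q(α,β)` for infinite multiindices: the limit of `q` of the prefixes. -/
noncomputable def qInf (q : Fin d → Fin d → ℂ) (α β : ℕ → Fin d) : ℂ :=
  Filter.limUnder Filter.atTop fun m => qMul q (prefixList α m) (prefixList β m)

/-- `(j, β₁, β₂, …)`. -/
def consSeq (j : Fin d) (β : ℕ → Fin d) : ℕ → Fin d
  | 0 => j
  | n + 1 => β n

open Classical in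
/-- `β ∖ j` for an infinite multiindex: remove the first occurrence of `j`. -/
noncomputable def eraseInf (j : Fin d) (β : ℕ → Fin d) : ℕ → Fin d :=
  if h : ∃ n, β n = j then fun k => if k < Nat.find h then β k else β (k + 1) else β

open Classical in
/-- `q(j,β)` for an infinite multiindex containing `j`. -/
noncomputable def qOneInf (q : Fin d → Fin d → ℂ) (j : Fin d) (β : ℕ → Fin d) : ℂ :=
  if h : ∃ n, β n = j then ∏ k ∈ Finset.range (Nat.find h), q j (β k) else 0

/-- Entries of the Fock form. -/
noncomputable def fockEntry (q : Fin d → Fin d → ℂ) (α β : List (Fin d)) : ℂ :=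
  if β.Perm α then qMul q β α else 0

/-- The Fock sesquilinear form on the free complex vector space with basis the
finite multiindices (conjugate-linear in the first argument). -/
noncomputable def fockForm (q : Fin d → Fin d → ℂ) (x y : List (Fin d) →₀ ℂ) : ℂ :=
  ∑ α ∈ x.support, ∑ β ∈ y.support, (starRingEnd ℂ) (x α) * y β * fockEntry q α β

theorem _root_.List.takeWhile_append_of_exists_not {α : Type*} {p : α → Bool}
    {l₁ l₂ : List α} (h : ∃ x ∈ l₁, ¬ p x) :
    (l₁ ++ l₂).takeWhile p = l₁.takeWhile p := by
  obtain ⟨x, hx, hpx⟩ := h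
  rw [List.takeWhile_append, if_neg]
  intro hlen
  have hself : l₁.takeWhile p = l₁ := (List.takeWhile_prefix p).eq_of_length hlen
  exact hpx (List.takeWhile_eq_self_iff.mp hself x hx)

theorem qOne_append_of_mem (q : Fin d → Fin d → ℂ) {j : Fin d} {α : List (Fin d)}
    (hj : j ∈ α) (δ : List (Fin d)) : qOne q j (α ++ δ) = qOne q j α := by
  rw [qOne, qOne, List.takeWhile_append_of_exists_not ⟨j, hj, by simp⟩]

theorem qMul_self (q : Fin d → Fin d → ℂ) (γ : List (Fin d)) : qMul q γ γ = 1 := by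
  induction γ with
  | nil => rfl
  | cons a γ ih => simp [qMul, qOne, ih]

theorem qMul_append_of_perm (q : Fin d → Fin d → ℂ) {β α : List (Fin d)} (h : β.Perm α)
    (γ δ : List (Fin d)) : qMul q (β ++ γ) (α ++ δ) = qMul q β α * qMul q γ δ := by
  induction β generalizing α with
  | nil => simp [h.symm.eq_nil, qMul]
  | cons b β ih =>
    have hb : b ∈ α := h.subset List.mem_cons_self
    have herase : β.Perm (α.erase b) := by simpa using h.erase b
    rw [List.cons_append, qMul, qMul, qOne_append_of_mem q hb, List.erase_append_left _ hb,
      ih herase, mul_assoc]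

theorem fockEntry_append_right (q : Fin d → Fin d → ℂ) (α β γ : List (Fin d)) :
    fockEntry q (α ++ γ) (β ++ γ) = fockEntry q α β := by
  by_cases h : β.Perm α
  · rw [fockEntry, fockEntry, if_pos (h.append_right γ), if_pos h,
      qMul_append_of_perm q h, qMul_self, mul_one]
  · rw [fockEntry, fockEntry, if_neg (mt (List.perm_append_right_iff γ).mp h), if_neg h]

theorem fockForm_mapDomain {q : Fin d → Fin d → ℂ} {f : List (Fin d) → List (Fin d)}
    (hf : Function.Injective f) (hentry : ∀ α β, fockEntry q (f α) (f β) = fockEntry q α β)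
    (x y : List (Fin d) →₀ ℂ) :
    fockForm q (Finsupp.mapDomain f x) (Finsupp.mapDomain f y) = fockForm q x y := by
  simp only [fockForm, Finsupp.mapDomain_support_of_injective hf,
    Finset.sum_image fun u _ v _ huv => hf huv, Finsupp.mapDomain_apply hf, hentry]

theorem statement5_general {d : ℕ} (q : Fin d → Fin d → ℂ)
    (a : Fin d) (x y : List (Fin d) →₀ ℂ) :
    fockForm q (Finsupp.mapDomain (fun γ => γ ++ [a]) x)
        (Finsupp.mapDomain (fun γ => γ ++ [a]) y)
      = fockForm q x y :=
  fockForm_mapDomain (List.append_left_injective [a])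
    (fun α β => fockEntry_append_right q α β [a]) x y

theorem statement5 {d : ℕ} (hd : 2 ≤ d) (q : Fin d → Fin d → ℂ)
    (hsym : ∀ i j : Fin d, i ≠ j → q i j = (starRingEnd ℂ) (q j i))
    (hlt : ∀ i j : Fin d, i ≠ j → ‖q i j‖ < 1)
    (k : ℕ) (a : Fin d) (x y : List (Fin d) →₀ ℂ)
    (hx : ∀ γ ∈ x.support, γ.length = k) (hy : ∀ γ ∈ y.support, γ.length = k) :
    fockForm q (Finsupp.mapDomain (fun γ => γ ++ [a]) x)
        (Finsupp.mapDomain (fun γ => γ ++ [a]) y)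
      = fockForm q x y :=
  statement5_general q a x y

end QCstar
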